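/- Let n : ℝ^d → (0,∞) with √n ∈ H¹(ℝ^d), and let u ∈ H¹(ℝ^d) satisfy |u| ≤ M√n a.e. and u/√n weakly differentiable. Then the identity ∫ n |∇(u/√n)|² dx = ∫ |∇u|² dx − ∫ (∇√n · ∇|u|²)/√n dx + ∫ (|∇√n|²/n)|u|² dx holds, all integrals being finite. -/

import Mathlib

open MeasureTheory Real InnerProductSpace

/-!
Where `n > 0`, the quotient rule gives `∇(u/√n) = ∇u/√n - (u/n) ∇√n`, and expanding
`n |∇(u/√n)|²` yields the claimed identity pointwise a.e. By AM-GM and `|u| ≤ M√n`, the cross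
term is dominated by `|M| (2|∇√n|² + |∇u|²)` and the last term by `M² |∇√n|²`; so every term is
integrable and the integral splits.
-/

theorem aemeasurable_of_ae_continuousAt {α β : Type*} [MeasurableSpace α]
    [TopologicalSpace α] [OpensMeasurableSpace α] [PseudoEMetricSpace β] [MeasurableSpace β]
    [BorelSpace β] {μ : Measure α} {f : α → β} (h : ∀ᵐ x ∂μ, ContinuousAt f x) :
    AEMeasurable f μ := by
  have hf : AEMeasurable f (μ.restrict {x | ContinuousAt f x}) :=
    ContinuousOn.aemeasurable (fun x hx => hx.continuousWithinAt)
      (measurableSet_of_continuousAt f)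
  rwa [Measure.restrict_eq_self_of_ae_mem (by exact h)] at hf

section Gradient

variable {F : Type*} [NormedAddCommGroup F] [InnerProductSpace ℝ F]

theorem measurable_gradient [CompleteSpace F] [MeasurableSpace F] [BorelSpace F] (f : F → ℝ) :
    Measurable (gradient f) :=
  (toDual ℝ F).symm.continuous.measurable.comp (measurable_fderiv ℝ f)

theorem aemeasurable_of_ae_hasGradientAt [CompleteSpace F] [MeasurableSpace F] [BorelSpace F]
    {μ : Measure F} {f : F → ℝ} {f' : F → F} (h : ∀ᵐ x ∂μ, HasGradientAt f (f' x) x) :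
    AEMeasurable f' μ :=
  (measurable_gradient f).aemeasurable.congr (h.mono fun _ hx => hx.gradient)

theorem HasGradientAt.div [CompleteSpace F] {f g : F → ℝ} {f' g' x : F}
    (hf : HasGradientAt f f' x) (hg : HasGradientAt g g' x) (hx : g x ≠ 0) :
    HasGradientAt (fun y => f y / g y) ((g x)⁻¹ • f' - (f x / g x ^ 2) • g') x := by
  rw [hasGradientAt_iff_hasFDerivAt]
  have h : HasFDerivAt (fun y => f y * (g y)⁻¹) _ x :=
    hf.hasFDerivAt.mul ((hasDerivAt_inv hx).comp_hasFDerivAt x hg.hasFDerivAt)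
  simp only [div_eq_mul_inv]
  refine h.congr_fderiv ?_
  ext y
  simp
  ring

theorem sq_mul_norm_inv_smul_sub_smul_sq {s : ℝ} (hs : s ≠ 0) (u : ℝ) (g g' : F) :
    s ^ 2 * ‖s⁻¹ • g - (u / s ^ 2) • g'‖ ^ 2
      = ‖g‖ ^ 2 - 2 * u * inner ℝ g' g / s + ‖g'‖ ^ 2 / s ^ 2 * u ^ 2 := by
  simp only [← real_inner_self_eq_norm_sq, inner_sub_left, inner_sub_right,
    real_inner_smul_left, real_inner_smul_right, real_inner_comm g g']
  field_simp
  ring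

theorem mul_norm_sq_of_hasGradientAt_div_sqrt [CompleteSpace F] {n u : F → ℝ} {gn g q x : F}
    (hnx : 0 < n x) (hgn : HasGradientAt (fun y => √(n y)) gn x) (hg : HasGradientAt u g x)
    (hq : HasGradientAt (fun y => u y / √(n y)) q x) :
    n x * ‖q‖ ^ 2 = ‖g‖ ^ 2 - 2 * u x * inner ℝ gn g / √(n x) + ‖gn‖ ^ 2 / n x * u x ^ 2 := by
  have hs : √(n x) ≠ 0 := (sqrt_pos.2 hnx).ne'
  have h := sq_mul_norm_inv_smul_sub_smul_sq hs (u x) g gn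
  rwa [← hq.unique (hg.div hgn hs), sq_sqrt hnx.le] at h

theorem abs_inner_two_mul_smul_le (u : ℝ) (a b : F) :
    |inner ℝ a ((2 * u) • b)| ≤ |u| * (‖a‖ ^ 2 + ‖b‖ ^ 2) :=
  calc |inner ℝ a ((2 * u) • b)| = |u| * (2 * |inner ℝ a b|) := by
        rw [real_inner_smul_right, abs_mul, abs_mul, abs_two]; ring
    _ ≤ |u| * (2 * ‖a‖ * ‖b‖) := by
        rw [mul_assoc 2]; gcongr; exact abs_real_inner_le_norm a b
    _ ≤ |u| * (‖a‖ ^ 2 + ‖b‖ ^ 2) := by gcongr; exact two_mul_le_add_sq _ _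

end Gradient

theorem abs_le_of_sqrt_sq_add_sq_le {a b M s : ℝ} (hs : 0 ≤ s) (h : √(a ^ 2 + b ^ 2) ≤ M * s) :
    |a| ≤ |M| * s :=
  calc |a| ≤ √(a ^ 2 + b ^ 2) := abs_le_sqrt (le_add_of_nonneg_right (sq_nonneg b))
    _ ≤ M * s := h
    _ ≤ |M| * s := by gcongr; exact le_abs_self M

theorem le_sq_mul_of_sqrt_le_mul_sqrt {a M n : ℝ} (ha : 0 ≤ a) (hn : 0 ≤ n)
    (h : √a ≤ M * √n) : a ≤ M ^ 2 * n := by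
  have h2 := pow_le_pow_left₀ (sqrt_nonneg a) h 2
  rwa [sq_sqrt ha, mul_pow, sq_sqrt hn] at h2

section Components

variable {F : Type*} [NormedAddCommGroup F]

theorem mul_norm_sq_add_norm_sq_of_hasGradientAt_div_sqrt [InnerProductSpace ℝ F] [CompleteSpace F] {n u1 u2 : F → ℝ}
    {gn g1 g2 q1 q2 x : F} (hnx : 0 < n x) (hgn : HasGradientAt (fun y => √(n y)) gn x)
    (hg1 : HasGradientAt u1 g1 x) (hg2 : HasGradientAt u2 g2 x)
    (hq1 : HasGradientAt (fun y => u1 y / √(n y)) q1 x)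
    (hq2 : HasGradientAt (fun y => u2 y / √(n y)) q2 x) :
    n x * (‖q1‖ ^ 2 + ‖q2‖ ^ 2)
      = (‖g1‖ ^ 2 + ‖g2‖ ^ 2) - inner ℝ gn ((2 * u1 x) • g1 + (2 * u2 x) • g2) / √(n x)
        + ‖gn‖ ^ 2 / n x * (u1 x ^ 2 + u2 x ^ 2) := by
  rw [mul_add, mul_norm_sq_of_hasGradientAt_div_sqrt hnx hgn hg1 hq1,
    mul_norm_sq_of_hasGradientAt_div_sqrt hnx hgn hg2 hq2, inner_add_right,
    real_inner_smul_right, real_inner_smul_right]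
  ring

theorem abs_inner_add_div_sqrt_le [InnerProductSpace ℝ F] {gn g1 g2 : F} {u1 u2 n M : ℝ} (hn : 0 < n)
    (hM : √(u1 ^ 2 + u2 ^ 2) ≤ M * √n) :
    |inner ℝ gn ((2 * u1) • g1 + (2 * u2) • g2) / √n|
      ≤ |M| * (2 * ‖gn‖ ^ 2 + (‖g1‖ ^ 2 + ‖g2‖ ^ 2)) := by
  have hs : 0 < √n := sqrt_pos.2 hn
  have h1 : |u1| ≤ |M| * √n := abs_le_of_sqrt_sq_add_sq_le hs.le hM
  have h2 : |u2| ≤ |M| * √n := abs_le_of_sqrt_sq_add_sq_le hs.le (by rwa [add_comm] at hM)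
  rw [abs_div, abs_of_pos hs, div_le_iff₀ hs, inner_add_right]
  calc |inner ℝ gn ((2 * u1) • g1) + inner ℝ gn ((2 * u2) • g2)|
      ≤ |u1| * (‖gn‖ ^ 2 + ‖g1‖ ^ 2) + |u2| * (‖gn‖ ^ 2 + ‖g2‖ ^ 2) :=
        (abs_add_le _ _).trans
          (add_le_add (abs_inner_two_mul_smul_le _ _ _) (abs_inner_two_mul_smul_le _ _ _))
    _ ≤ |M| * √n * (‖gn‖ ^ 2 + ‖g1‖ ^ 2) + |M| * √n * (‖gn‖ ^ 2 + ‖g2‖ ^ 2) := by gcongr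
    _ = |M| * (2 * ‖gn‖ ^ 2 + (‖g1‖ ^ 2 + ‖g2‖ ^ 2)) * √n := by ring

variable {α : Type*} [MeasurableSpace α] {μ : Measure α} {n u1 u2 : α → ℝ} {gn g1 g2 : α → F}
  {M : ℝ}

theorem integrable_inner_add_div_sqrt [InnerProductSpace ℝ F] (hn : ∀ᵐ x ∂μ, 0 < n x)
    (hM : ∀ᵐ x ∂μ, √(u1 x ^ 2 + u2 x ^ 2) ≤ M * √(n x))
    (hmeas : AEStronglyMeasurable
      (fun x => inner ℝ (gn x) ((2 * u1 x) • g1 x + (2 * u2 x) • g2 x) / √(n x)) μ)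
    (hg : Integrable (fun x => ‖g1 x‖ ^ 2 + ‖g2 x‖ ^ 2) μ)
    (hgn : Integrable (fun x => ‖gn x‖ ^ 2) μ) :
    Integrable (fun x => inner ℝ (gn x) ((2 * u1 x) • g1 x + (2 * u2 x) • g2 x) / √(n x)) μ :=
  (((hgn.const_mul 2).add hg).const_mul |M|).mono' hmeas <| by
    filter_upwards [hn, hM] with x hnx hMx
    exact abs_inner_add_div_sqrt_le hnx hMx

theorem integrable_norm_sq_div_mul_sq_add_sq (hn : ∀ᵐ x ∂μ, 0 < n x)
    (hM : ∀ᵐ x ∂μ, √(u1 x ^ 2 + u2 x ^ 2) ≤ M * √(n x))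
    (hmeas : AEStronglyMeasurable (fun x => ‖gn x‖ ^ 2 / n x * (u1 x ^ 2 + u2 x ^ 2)) μ)
    (hgn : Integrable (fun x => ‖gn x‖ ^ 2) μ) :
    Integrable (fun x => ‖gn x‖ ^ 2 / n x * (u1 x ^ 2 + u2 x ^ 2)) μ :=
  (hgn.const_mul (M ^ 2)).mono' hmeas <| by
    filter_upwards [hn, hM] with x hnx hMx
    rw [norm_of_nonneg (by positivity)]
    calc ‖gn x‖ ^ 2 / n x * (u1 x ^ 2 + u2 x ^ 2) ≤ ‖gn x‖ ^ 2 / n x * (M ^ 2 * n x) := by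
          gcongr; exact le_sq_mul_of_sqrt_le_mul_sqrt (by positivity) hnx.le hMx
      _ = M ^ 2 * ‖gn x‖ ^ 2 := by field_simp

end Components

theorem stmt6_general {d : ℕ} (n u1 u2 : EuclideanSpace ℝ (Fin d) → ℝ)
    (gn g1 g2 q1 q2 : EuclideanSpace ℝ (Fin d) → EuclideanSpace ℝ (Fin d))
    (hn : ∀ᵐ x ∂volume, 0 < n x)
    (hgn : ∀ᵐ x ∂volume, HasGradientAt (fun y => Real.sqrt (n y)) (gn x) x)
    (hg1 : ∀ᵐ x ∂volume, HasGradientAt u1 (g1 x) x)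
    (hg2 : ∀ᵐ x ∂volume, HasGradientAt u2 (g2 x) x)
    (hq1 : ∀ᵐ x ∂volume, HasGradientAt (fun y => u1 y / Real.sqrt (n y)) (q1 x) x)
    (hq2 : ∀ᵐ x ∂volume, HasGradientAt (fun y => u2 y / Real.sqrt (n y)) (q2 x) x)
    (M : ℝ)
    (hM : ∀ᵐ x ∂volume, Real.sqrt (u1 x ^ 2 + u2 x ^ 2) ≤ M * Real.sqrt (n x))
    (hgradu : Integrable (fun x => ‖g1 x‖ ^ 2 + ‖g2 x‖ ^ 2))
    (hgradn : Integrable (fun x => ‖gn x‖ ^ 2)) :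
    Integrable (fun x => n x * (‖q1 x‖ ^ 2 + ‖q2 x‖ ^ 2))
    ∧ Integrable (fun x => ‖g1 x‖ ^ 2 + ‖g2 x‖ ^ 2)
    ∧ Integrable (fun x =>
        (inner ℝ (gn x) ((2 * u1 x) • g1 x + (2 * u2 x) • g2 x) : ℝ) / Real.sqrt (n x))
    ∧ Integrable (fun x => ‖gn x‖ ^ 2 / n x * (u1 x ^ 2 + u2 x ^ 2))
    ∧ (∫ x, n x * (‖q1 x‖ ^ 2 + ‖q2 x‖ ^ 2))
        = (∫ x, (‖g1 x‖ ^ 2 + ‖g2 x‖ ^ 2))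
          - (∫ x, (inner ℝ (gn x) ((2 * u1 x) • g1 x + (2 * u2 x) • g2 x) : ℝ) / Real.sqrt (n x))
          + ∫ x, ‖gn x‖ ^ 2 / n x * (u1 x ^ 2 + u2 x ^ 2) := by
  have hsqrt := aemeasurable_of_ae_continuousAt (hgn.mono fun _ hx => hx.continuousAt)
  have hu1 := aemeasurable_of_ae_continuousAt (hg1.mono fun _ hx => hx.continuousAt)
  have hu2 := aemeasurable_of_ae_continuousAt (hg2.mono fun _ hx => hx.continuousAt)
  have hnm : AEMeasurable n := (hsqrt.pow_const 2).congr (hn.mono fun _ hx => sq_sqrt hx.le)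
  have hgnm := aemeasurable_of_ae_hasGradientAt hgn
  have hg1m := aemeasurable_of_ae_hasGradientAt hg1
  have hg2m := aemeasurable_of_ae_hasGradientAt hg2
  have hB := integrable_inner_add_div_sqrt hn hM
    ((hgnm.inner (((hu1.const_mul 2).smul hg1m).add ((hu2.const_mul 2).smul hg2m))).div
      hsqrt).aestronglyMeasurable hgradu hgradn
  have hC := integrable_norm_sq_div_mul_sq_add_sq hn hM (by fun_prop) hgradn
  have key : ∀ᵐ x, n x * (‖q1 x‖ ^ 2 + ‖q2 x‖ ^ 2)
      = (‖g1 x‖ ^ 2 + ‖g2 x‖ ^ 2)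
        - inner ℝ (gn x) ((2 * u1 x) • g1 x + (2 * u2 x) • g2 x) / √(n x)
        + ‖gn x‖ ^ 2 / n x * (u1 x ^ 2 + u2 x ^ 2) := by
    filter_upwards [hn, hgn, hg1, hg2, hq1, hq2] with x hnx hgnx hg1x hg2x hq1x hq2x
    exact mul_norm_sq_add_norm_sq_of_hasGradientAt_div_sqrt hnx hgnx hg1x hg2x hq1x hq2x
  have hAB : Integrable fun x => (‖g1 x‖ ^ 2 + ‖g2 x‖ ^ 2)
      - inner ℝ (gn x) ((2 * u1 x) • g1 x + (2 * u2 x) • g2 x) / √(n x) := hgradu.sub hB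
  refine ⟨(hAB.add hC).congr (key.mono fun _ hx => hx.symm), hgradu, hB, hC, ?_⟩
  rw [integral_congr_ae key, integral_add hAB hC, integral_sub hgradu hB]

/-- For n > 0 with √n ∈ H¹ and u = u₁ + i u₂ ∈ H¹ with |u| ≤ M√n a.e. and u/√n weakly
differentiable (gradients gn of √n, g1,g2 of u₁,u₂, q1,q2 of u₁/√n, u₂/√n), one has
∫ n |∇(u/√n)|² = ∫ |∇u|² − ∫ (∇√n·∇|u|²)/√n + ∫ (|∇√n|²/n)|u|², all integrals finite. -/
theorem stmt6 {d : ℕ} (n u1 u2 : EuclideanSpace ℝ (Fin d) → ℝ)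
    (gn g1 g2 q1 q2 : EuclideanSpace ℝ (Fin d) → EuclideanSpace ℝ (Fin d))
    (hn : ∀ᵐ x ∂volume, 0 < n x)
    (hgn : ∀ᵐ x ∂volume, HasGradientAt (fun y => Real.sqrt (n y)) (gn x) x)
    (hg1 : ∀ᵐ x ∂volume, HasGradientAt u1 (g1 x) x)
    (hg2 : ∀ᵐ x ∂volume, HasGradientAt u2 (g2 x) x)
    (hq1 : ∀ᵐ x ∂volume, HasGradientAt (fun y => u1 y / Real.sqrt (n y)) (q1 x) x)
    (hq2 : ∀ᵐ x ∂volume, HasGradientAt (fun y => u2 y / Real.sqrt (n y)) (q2 x) x)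
    (M : ℝ)
    (hM : ∀ᵐ x ∂volume, Real.sqrt (u1 x ^ 2 + u2 x ^ 2) ≤ M * Real.sqrt (n x))
    (hu : Integrable (fun x => u1 x ^ 2 + u2 x ^ 2))
    (hgradu : Integrable (fun x => ‖g1 x‖ ^ 2 + ‖g2 x‖ ^ 2))
    (hgradn : Integrable (fun x => ‖gn x‖ ^ 2)) :
    Integrable (fun x => n x * (‖q1 x‖ ^ 2 + ‖q2 x‖ ^ 2))
    ∧ Integrable (fun x => ‖g1 x‖ ^ 2 + ‖g2 x‖ ^ 2)
    ∧ Integrable (fun x =>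
        (inner ℝ (gn x) ((2 * u1 x) • g1 x + (2 * u2 x) • g2 x) : ℝ) / Real.sqrt (n x))
    ∧ Integrable (fun x => ‖gn x‖ ^ 2 / n x * (u1 x ^ 2 + u2 x ^ 2))
    ∧ (∫ x, n x * (‖q1 x‖ ^ 2 + ‖q2 x‖ ^ 2))
        = (∫ x, (‖g1 x‖ ^ 2 + ‖g2 x‖ ^ 2))
          - (∫ x, (inner ℝ (gn x) ((2 * u1 x) • g1 x + (2 * u2 x) • g2 x) : ℝ) / Real.sqrt (n x))
          + ∫ x, ‖gn x‖ ^ 2 / n x * (u1 x ^ 2 + u2 x ^ 2) :=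
  stmt6_general n u1 u2 gn g1 g2 q1 q2 hn hgn hg1 hg2 hq1 hq2 M hM hgradu hgradn
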